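/- Every noncrossing graph (in particular, every outerplanar graph with vertices numbered along its outer face) has an {L}-representation: if G is a noncrossing simple graph on {1,…,n}, then there is an assignment i ↦ c(i) of an L-shape to each vertex i such that for all distinct i, j: c(i) ∩ c(j) ≠ ∅ if and only if i and j are adjacent in G, and c(i) ∩ c(j) contains at most one point. -/
import Mathlib


/-- An L-shape: a corner at `(x, y)` with one arm extending upward and one arm
extending rightward. -/
def LShape (x y a b : ℝ) : Set (ℝ × ℝ) :=
  ({x} : Set ℝ) ×ˢ Set.Icc y (y + a) ∪ Set.Icc x (x + b) ×ˢ ({y} : Set ℝ)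

def IsLShape (c : Set (ℝ × ℝ)) : Prop :=
  ∃ x y a b : ℝ, 0 < a ∧ 0 < b ∧ c = LShape x y a b

namespace LRep

variable {n : ℕ} (G : SimpleGraph (Fin n))

attribute [local instance] Classical.propDecidable

/-- neighbors above `i` -/
noncomputable def up (i : Fin n) : Finset (Fin n) :=
  Finset.univ.filter (fun j => G.Adj i j ∧ i < j)

/-- neighbors below `i` -/
noncomputable def dn (i : Fin n) : Finset (Fin n) :=
  Finset.univ.filter (fun j => G.Adj j i ∧ j < i)

noncomputable def Mv (i : Fin n) : ℝ :=
  if h : (up G i).Nonempty then (((up G i).max' h).val : ℝ) else (i.val : ℝ) + 1/2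

noncomputable def mv (i : Fin n) : ℝ :=
  if h : (dn G i).Nonempty then (((dn G i).min' h).val : ℝ) else (i.val : ℝ) - 1/2

lemma lt_Mv (i : Fin n) : (i.val : ℝ) < Mv G i := by
  unfold Mv
  split_ifs with h
  · have hm := (up G i).max'_mem h
    simp only [up, Finset.mem_filter] at hm
    exact_mod_cast hm.2.2
  · linarith

lemma mv_lt (i : Fin n) : mv G i < (i.val : ℝ) := by
  unfold mv
  split_ifs with h
  · have hm := (dn G i).min'_mem h
    simp only [dn, Finset.mem_filter] at hm
    exact_mod_cast hm.2.2
  · linarith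

lemma adj_le_Mv {i j : Fin n} (h : G.Adj i j) (hij : i < j) : (j.val : ℝ) ≤ Mv G i := by
  have hmem : j ∈ up G i := by simp [up, h, hij]
  have hne : (up G i).Nonempty := ⟨j, hmem⟩
  have := (up G i).le_max' j hmem
  unfold Mv
  rw [dif_pos hne]
  exact_mod_cast this

lemma mv_le_adj {i j : Fin n} (h : G.Adj i j) (hij : i < j) : mv G j ≤ (i.val : ℝ) := by
  have hmem : i ∈ dn G j := by simp [dn, h, hij]
  have hne : (dn G j).Nonempty := ⟨i, hmem⟩
  have := (dn G j).min'_le i hmem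
  unfold mv
  rw [dif_pos hne]
  exact_mod_cast this

lemma adj_of_bounds
    (hnc : ∀ i j k l : Fin n, i < j → j < k → k < l → G.Adj i k → ¬ G.Adj j l)
    {i j : Fin n} (hij : i < j) (h1 : (j.val : ℝ) ≤ Mv G i) (h2 : mv G j ≤ (i.val : ℝ)) :
    G.Adj i j := by
  have hij' : (i.val : ℝ) + 1 ≤ (j.val : ℝ) := by exact_mod_cast hij
  -- up G i is nonempty
  have hu : (up G i).Nonempty := by
    by_contra hu
    rw [Mv, dif_neg hu] at h1
    linarith
  have hd : (dn G j).Nonempty := by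
    by_contra hd
    rw [mv, dif_neg hd] at h2
    linarith
  set l := (up G i).max' hu with hl
  set k := (dn G j).min' hd with hk
  have hlm := (up G i).max'_mem hu
  have hkm := (dn G j).min'_mem hd
  simp only [up, Finset.mem_filter] at hlm
  simp only [dn, Finset.mem_filter] at hkm
  have hAdj_il : G.Adj i l := hlm.2.1
  have hil : i < l := hlm.2.2
  have hAdj_kj : G.Adj k j := hkm.2.1
  have hkj : k < j := hkm.2.2
  rw [Mv, dif_pos hu] at h1
  rw [mv, dif_pos hd] at h2
  have hjl : j ≤ l := by
    have : (j.val : ℕ) ≤ (l.val : ℕ) := by exact_mod_cast h1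
    exact this
  have hki : k ≤ i := by
    have : (k.val : ℕ) ≤ (i.val : ℕ) := by exact_mod_cast h2
    exact this
  rcases eq_or_lt_of_le hjl with hjl' | hjl'
  · rw [hjl']; exact hAdj_il
  rcases eq_or_lt_of_le hki with hki' | hki'
  · rw [← hki']; exact hAdj_kj
  exact absurd hAdj_il (hnc k i j l hki' hij hjl' hAdj_kj)

noncomputable def rep (i : Fin n) : Set (ℝ × ℝ) :=
  LShape (i.val : ℝ) (-(i.val : ℝ)) ((i.val : ℝ) - mv G i) (Mv G i - (i.val : ℝ))

lemma mem_rep_iff {i : Fin n} {p : ℝ × ℝ} :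
    p ∈ rep G i ↔
      (p.1 = (i.val : ℝ) ∧ -(i.val : ℝ) ≤ p.2 ∧ p.2 ≤ -(mv G i)) ∨
      ((i.val : ℝ) ≤ p.1 ∧ p.1 ≤ Mv G i ∧ p.2 = -(i.val : ℝ)) := by
  simp only [rep, LShape, Set.mem_union, Set.mem_prod, Set.mem_singleton_iff, Set.mem_Icc]
  constructor
  · rintro (⟨h1, h2, h3⟩ | ⟨⟨h1, h2⟩, h3⟩)
    · exact Or.inl ⟨h1, h2, by linarith⟩
    · exact Or.inr ⟨h1, by linarith, h3⟩
  · rintro (⟨h1, h2, h3⟩ | ⟨h1, h2, h3⟩)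
    · exact Or.inl ⟨h1, h2, by linarith⟩
    · exact Or.inr ⟨⟨h1, by linarith⟩, h3⟩

lemma inter_subset {i j : Fin n} (hij : i < j) :
    rep G i ∩ rep G j ⊆ {((j.val : ℝ), -(i.val : ℝ))} := by
  rintro p ⟨hpi, hpj⟩
  rw [mem_rep_iff] at hpi hpj
  have hij' : (i.val : ℝ) < (j.val : ℝ) := by exact_mod_cast hij
  rcases hpi with ⟨h1, _, _⟩ | ⟨h1, h2, h3⟩
  · rcases hpj with ⟨h1', _, _⟩ | ⟨h1', _, _⟩
    · exfalso; rw [h1] at h1'; linarith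
    · exfalso; rw [h1] at h1'; linarith
  · rcases hpj with ⟨h1', h2', h3'⟩ | ⟨_, _, h3'⟩
    · simp only [Set.mem_singleton_iff]
      exact Prod.ext h1' h3
    · exfalso; rw [h3'] at h3; have : (i.val : ℝ) = (j.val : ℝ) := by linarith
      linarith

lemma corner_mem_of_adj {i j : Fin n} (h : G.Adj i j) (hij : i < j) :
    ((j.val : ℝ), -(i.val : ℝ)) ∈ rep G i ∩ rep G j := by
  have hij' : (i.val : ℝ) < (j.val : ℝ) := by exact_mod_cast hij
  constructor
  · rw [mem_rep_iff]
    dsimp only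
    exact Or.inr ⟨le_of_lt hij', adj_le_Mv G h hij, rfl⟩
  · rw [mem_rep_iff]
    dsimp only
    refine Or.inl ⟨rfl, by linarith, ?_⟩
    have := mv_le_adj G h hij
    linarith

lemma adj_of_inter
    (hnc : ∀ i j k l : Fin n, i < j → j < k → k < l → G.Adj i k → ¬ G.Adj j l)
    {i j : Fin n} (hij : i < j) (hne : (rep G i ∩ rep G j).Nonempty) : G.Adj i j := by
  obtain ⟨p, hp⟩ := hne
  have hpeq := inter_subset G hij hp
  simp only [Set.mem_singleton_iff] at hpeq
  subst hpeq
  obtain ⟨hpi, hpj⟩ := hp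
  rw [mem_rep_iff] at hpi hpj
  dsimp only at hpi hpj
  have hij' : (i.val : ℝ) < (j.val : ℝ) := by exact_mod_cast hij
  have h1 : (j.val : ℝ) ≤ Mv G i := by
    rcases hpi with ⟨h, _, _⟩ | ⟨_, h, _⟩
    · exfalso; linarith
    · exact h
  have h2 : mv G j ≤ (i.val : ℝ) := by
    rcases hpj with ⟨_, _, h⟩ | ⟨_, _, h⟩
    · linarith
    · exfalso; linarith
  exact adj_of_bounds G hnc hij h1 h2

end LRep

/-- Every noncrossing graph on `{1, …, n}` has an `{L}`-representation. -/
theorem noncrossing_graph_has_L_representation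
    {n : ℕ} (G : SimpleGraph (Fin n))
    (hnc : ∀ i j k l : Fin n, i < j → j < k → k < l → G.Adj i k → ¬ G.Adj j l) :
    ∃ c : Fin n → Set (ℝ × ℝ),
      (∀ i : Fin n, IsLShape (c i)) ∧
      ∀ i j : Fin n, i ≠ j →
        (((c i ∩ c j).Nonempty ↔ G.Adj i j) ∧ (c i ∩ c j).Subsingleton) := by
  refine ⟨LRep.rep G, fun i => ?_, fun i j hij => ?_⟩
  · exact ⟨(i.val : ℝ), -(i.val : ℝ), (i.val : ℝ) - LRep.mv G i, LRep.Mv G i - (i.val : ℝ),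
      by linarith [LRep.mv_lt G i], by linarith [LRep.lt_Mv G i], rfl⟩
  · -- handle by wlog on order
    have key : ∀ a b : Fin n, a < b →
        ((LRep.rep G a ∩ LRep.rep G b).Nonempty ↔ G.Adj a b) ∧
        (LRep.rep G a ∩ LRep.rep G b).Subsingleton := by
      intro a b hab
      refine ⟨⟨LRep.adj_of_inter G hnc hab, fun h => ⟨_, LRep.corner_mem_of_adj G h hab⟩⟩, ?_⟩
      exact Set.Subsingleton.anti Set.subsingleton_singleton (LRep.inter_subset G hab)
    rcases lt_or_gt_of_ne hij with h | h
    · exact key i j h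
    · obtain ⟨h1, h2⟩ := key j i h
      rw [Set.inter_comm] at h1 h2
      exact ⟨by rw [h1]; exact ⟨fun a => a.symm, fun a => a.symm⟩, h2⟩
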